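/- arXiv:1010.2412 — 2 statements merged into one kernel-verified Lean document; each statement's English description precedes it below -/
import Mathlib

section
/- Let u, q be smooth solutions of the system c u_t + div q = f and q + ν q_t + k ∇u = 0 on a bounded domain Ω with u = 0 on ∂Ω, where c ≥ c₀ > 0, k ≥ k₀ > 0, ν > 0. Define G(t) = ∫_Ω c u² dx + ν ∫_Ω k^{-1}|q|² dx. Then G'(t) ≤ G(t) + ∫_Ω c^{-1} f² dx, and hence G(t) ≤ eᵗ G(0) + ∫₀ᵗ e^{t−θ} ∫_Ω c^{-1} f(·,θ)² dx dθ. -/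
open MeasureTheory

lemma integral_deriv_open_bounded (U : Set ℝ) (hU : IsOpen U) (hUbd : Bornology.IsBounded U)
    (g : ℝ → ℝ) (hg : ContDiff ℝ (⊤ : ℕ∞) g) (hg0 : ∀ s ∈ frontier U, g s = 0) :
    ∫ s in U, deriv g s = 0 := by
  rcases U.eq_empty_or_nonempty with rfl | hne
  · simp
  obtain ⟨M, hM⟩ := hUbd.subset_ball 0
  have hout : ∀ y : ℝ, M ≤ |y| → y ∉ U := fun y hy h =>
    absurd (by simpa [Real.dist_eq] using hM h : |y| < M) (not_lt.2 hy)
  have habs : ∀ y ∈ U, |y| < M := fun y hy => by simpa [Real.dist_eq] using hM hy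
  set A : ℝ → ℝ := fun r => sSup (Uᶜ ∩ Set.Iic r) with hA
  set B : ℝ → ℝ := fun r => sInf (Uᶜ ∩ Set.Ici r) with hB
  have hAmemIic : ∀ r ∈ U, A r ∈ Uᶜ ∩ Set.Iic r := by
    intro r hr
    apply IsClosed.csSup_mem (hU.isClosed_compl.inter isClosed_Iic)
    · refine ⟨-(|M|+1), hout _ ?_, ?_⟩
      · rw [abs_neg, abs_of_nonneg (by positivity)]
        linarith [le_abs_self M]
      · have := habs r hr
        have := neg_abs_le r
        simp only [Set.mem_Iic]
        linarith [le_abs_self M]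
    · exact ⟨r, fun y hy => hy.2⟩
  have hBmemIci : ∀ r ∈ U, B r ∈ Uᶜ ∩ Set.Ici r := by
    intro r hr
    apply IsClosed.csInf_mem (hU.isClosed_compl.inter isClosed_Ici)
    · refine ⟨|M|+1, ?_⟩
      have := habs r hr
      simp only [Set.mem_inter_iff, Set.mem_Ici]
      constructor
      · exact hout _ (by rw [abs_of_nonneg (by positivity)]; linarith [le_abs_self M])
      · linarith [le_abs_self M, le_abs_self r]
    · exact ⟨r, fun y hy => hy.2⟩
  have hAler : ∀ r ∈ U, A r ≤ r := fun r hr => Set.mem_Iic.mp (hAmemIic r hr).2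
  have hBger : ∀ r ∈ U, r ≤ B r := fun r hr => Set.mem_Ici.mp (hBmemIci r hr).2
  have hAlt : ∀ r ∈ U, A r < r := by
    intro r hr
    rcases lt_or_eq_of_le (hAler r hr) with h | h
    · exact h
    · exact absurd (h ▸ (hAmemIic r hr).1) (by simp [hr])
  have hBgt : ∀ r ∈ U, r < B r := by
    intro r hr
    rcases lt_or_eq_of_le (hBger r hr) with h | h
    · exact h
    · exact absurd (h ▸ hr) (by simpa using (hBmemIci r hr).1)
  have hIoo : ∀ r ∈ U, Set.Ioo (A r) (B r) ⊆ U := by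
    intro r hr y hy
    by_contra hyU
    rcases le_or_gt y r with h | h
    · have bdd : BddAbove (Uᶜ ∩ Set.Iic r) := ⟨r, fun z hz => hz.2⟩
      exact absurd (le_csSup bdd (Set.mem_inter hyU h)) (not_le.2 hy.1)
    · have bdd : BddBelow (Uᶜ ∩ Set.Ici r) := ⟨r, fun z hz => hz.2⟩
      exact absurd (csInf_le bdd (Set.mem_inter hyU h.le)) (not_le.2 hy.2)
  have hAfr : ∀ r ∈ U, A r ∈ frontier U := by
    intro r hr
    have hlt : A r < B r := (hAlt r hr).trans (hBgt r hr)
    constructor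
    · exact (closure_mono (hIoo r hr)) (by rw [closure_Ioo hlt.ne]; exact ⟨le_refl _, hlt.le⟩)
    · rw [hU.interior_eq]; exact (hAmemIic r hr).1
  have hBfr : ∀ r ∈ U, B r ∈ frontier U := by
    intro r hr
    have hlt : A r < B r := (hAlt r hr).trans (hBgt r hr)
    constructor
    · exact (closure_mono (hIoo r hr)) (by rw [closure_Ioo hlt.ne]; exact ⟨hlt.le, le_refl _⟩)
    · rw [hU.interior_eq]; exact (hBmemIci r hr).1
  have hkey : ∀ r ∈ U, ∀ x ∈ Set.Ioo (A r) (B r), A x = A r ∧ B x = B r := by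
    intro r hr x hx
    have hxU : x ∈ U := hIoo r hr hx
    constructor
    · rcases lt_trichotomy (A x) (A r) with h | h | h
      · exact absurd (hIoo x hxU ⟨h, hx.1.trans (hBgt x hxU)⟩)
          (by simpa using (hAmemIic r hr).1)
      · exact h
      · exact absurd (hIoo r hr ⟨h, lt_of_le_of_lt (hAler x hxU) hx.2⟩)
          (by simpa using (hAmemIic x hxU).1)
    · rcases lt_trichotomy (B x) (B r) with h | h | h
      · exact absurd (hIoo r hr ⟨hx.1.trans (hBgt x hxU), h⟩)
          (by simpa using (hBmemIci x hxU).1)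
      · exact h
      · exact absurd (hIoo x hxU ⟨lt_of_le_of_lt (hAler x hxU) hx.2, h⟩)
          (by simpa using (hBmemIci r hr).1)
  -- countable family of components
  set S : Set (ℝ × ℝ) := (fun r => (A r, B r)) '' (U ∩ Set.range ((↑) : ℚ → ℝ)) with hS
  have hScount : S.Countable :=
    ((Set.countable_range _).mono Set.inter_subset_right).image _
  have hUeq : U = ⋃ p ∈ S, Set.Ioo p.1 p.2 := by
    apply Set.Subset.antisymm
    · intro x hx
      obtain ⟨rq, hrq1, hrq2⟩ := exists_rat_btwn ((hAlt x hx).trans (hBgt x hx))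
      have hrU : (rq:ℝ) ∈ U := hIoo x hx ⟨hrq1, hrq2⟩
      have := hkey x hx (rq:ℝ) ⟨hrq1, hrq2⟩
      refine Set.mem_biUnion (Set.mem_image_of_mem _ ⟨hrU, ⟨rq, rfl⟩⟩) ?_
      rw [this.1, this.2]
      exact ⟨hAlt x hx, hBgt x hx⟩
    · intro x hx
      simp only [Set.mem_iUnion] at hx
      obtain ⟨p, ⟨r, hr, rfl⟩, hxp⟩ := hx
      exact hIoo r hr.1 hxp
  have hdisj : S.Pairwise (fun p p' => Disjoint (Set.Ioo p.1 p.2) (Set.Ioo p'.1 p'.2)) := by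
    rintro ⟨a, b⟩ ⟨r, hr, hrr⟩ ⟨a', b'⟩ ⟨r', hr', hrr'⟩ hne'
    rw [Set.disjoint_left]
    rintro y hy hy'
    obtain ⟨e1, e2⟩ := Prod.mk.injEq .. ▸ hrr
    apply hne'
    cases hrr; cases hrr'
    have h1 := hkey r hr.1 y hy
    have h2 := hkey r' hr'.1 y hy'
    rw [Prod.ext_iff]
    exact ⟨(h1.1.symm.trans h2.1), (h1.2.symm.trans h2.2)⟩
  -- integrability
  have hderivcont : Continuous (deriv g) := hg.continuous_deriv (by simp)
  have hint : IntegrableOn (deriv g) U := by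
    refine IntegrableOn.mono_set ?_ subset_closure
    exact hderivcont.continuousOn.integrableOn_compact hUbd.isCompact_closure
  -- sum over components
  haveI : Countable ↥S := hScount.to_subtype
  have : ∫ s in U, deriv g s = ∑' p : S, ∫ s in Set.Ioo (p:ℝ×ℝ).1 (p:ℝ×ℝ).2, deriv g s := by
    rw [hUeq]
    rw [← Set.iUnion_subtype (fun p => p ∈ S) (fun p => Set.Ioo (p:ℝ×ℝ).1 (p:ℝ×ℝ).2)] at *
    refine integral_iUnion (fun p => measurableSet_Ioo) ?_ (hUeq ▸ hint)
    exact fun p p' hpp' => hdisj p.2 p'.2 (fun h => hpp' (Subtype.ext h))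
  rw [this]
  have hzero : ∀ p : S, ∫ s in Set.Ioo (p:ℝ×ℝ).1 (p:ℝ×ℝ).2, deriv g s = 0 := by
    rintro ⟨⟨a, b⟩, r, hr, hab⟩
    injection hab with h1 h2
    subst h1; subst h2
    have hle : A r ≤ B r := ((hAlt r hr.1).trans (hBgt r hr.1)).le
    have : ∫ s in Set.Ioo (A r) (B r), deriv g s = ∫ s in (A r)..(B r), deriv g s := by
      rw [intervalIntegral.integral_of_le hle, integral_Ioc_eq_integral_Ioo]
    rw [this, intervalIntegral.integral_deriv_eq_sub
        (fun x _ => (hg.differentiable (by simp)).differentiableAt)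
        (hderivcont.intervalIntegrable _ _)]
    rw [hg0 _ (hAfr r hr.1), hg0 _ (hBfr r hr.1), sub_zero]
  simp [hzero]



lemma integral_fderiv_single_zero {n : ℕ} (Ω : Set (EuclideanSpace ℝ (Fin n)))
    (hΩopen : IsOpen Ω) (hΩbd : Bornology.IsBounded Ω)
    (φ : EuclideanSpace ℝ (Fin n) → ℝ) (hφ : ContDiff ℝ (⊤ : ℕ∞) φ)
    (h0 : ∀ x ∈ frontier Ω, φ x = 0) (i : Fin n) :
    ∫ x in Ω, fderiv ℝ φ x (EuclideanSpace.single i 1) = 0 := by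
  obtain ⟨m, rfl⟩ : ∃ m, n = m + 1 := ⟨n - 1, by have := i.pos; omega⟩
  set D : EuclideanSpace ℝ (Fin (m+1)) → ℝ :=
    fun x => fderiv ℝ φ x (EuclideanSpace.single i 1) with hD
  have hDcont : Continuous D := (hφ.continuous_fderiv (by simp)).clm_apply continuous_const
  have hΩmeas := hΩopen.measurableSet
  have hintD : Integrable (Ω.indicator D) := by
    rw [integrable_indicator_iff hΩmeas]
    exact (hDcont.continuousOn.integrableOn_compact hΩbd.isCompact_closure).mono_set
      subset_closure
  set e₁ := (MeasurableEquiv.toLp 2 (Fin (m+1) → ℝ)).symm with he₁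
  set e₂ := MeasurableEquiv.piFinSuccAbove (fun _ : Fin (m+1) => ℝ) i with he₂
  set e := e₁.trans e₂ with he
  have hP : MeasurePreserving e volume volume :=
    (EuclideanSpace.volume_preserving_symm_measurableEquiv_toLp _).trans
      (volume_preserving_piFinSuccAbove (fun _ : Fin (m+1) => ℝ) i)
  set ι : (Fin m → ℝ) → ℝ → EuclideanSpace ℝ (Fin (m+1)) := fun w s => e.symm (s, w) with hι
  have hιcoord : ∀ w s j, ι w s j = Fin.insertNth (α := fun _ : Fin (m+1) => ℝ) i s w j := by
    intro w s j
    simp [hι, he, he₁, he₂, MeasurableEquiv.trans, MeasurableEquiv.symm_symm, MeasurableEquiv.coe_toLp,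
      MeasurableEquiv.piFinSuccAbove_symm_apply]
  have haff : ∀ w s, ι w s = ι w 0 + s • EuclideanSpace.single i (1:ℝ) := by
    intro w s; ext j
    have h1 := hιcoord w s j; have h2 := hιcoord w 0 j
    rcases eq_or_ne j i with rfl | hne
    · simp [PiLp.add_apply, PiLp.smul_apply, EuclideanSpace.single_apply, h1, h2,
        Fin.insertNth_apply_same]
    · obtain ⟨l, hl⟩ := Fin.exists_succAbove_eq hne
      simp only [PiLp.add_apply, PiLp.smul_apply, EuclideanSpace.single_apply, h1, h2,
        ← hl, Fin.insertNth_apply_succAbove, smul_eq_mul]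
      have : i.succAbove l ≠ i := Fin.succAbove_ne i l
      simp [this, hιcoord]
  have hderivι : ∀ w s, HasDerivAt (ι w) (EuclideanSpace.single i 1) s := by
    intro w s
    have hfun : ι w = fun s => ι w 0 + s • EuclideanSpace.single i (1:ℝ) := funext (haff w)
    rw [hfun]
    simpa using ((hasDerivAt_id s).smul_const (EuclideanSpace.single i (1:ℝ))).const_add (ι w 0)
  have hιcont : ∀ w, Continuous (ι w) := by
    intro w
    have hfun : ι w = fun s => ι w 0 + s • EuclideanSpace.single i (1:ℝ) := funext (haff w)
    rw [hfun]; exact continuous_const.add (continuous_id.smul continuous_const)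
  set U : (Fin m → ℝ) → Set ℝ := fun w => (ι w) ⁻¹' Ω with hU
  have hUopen : ∀ w, IsOpen (U w) := fun w => hΩopen.preimage (hιcont w)
  have hUbd : ∀ w, Bornology.IsBounded (U w) := by
    intro w
    obtain ⟨R, hR⟩ := hΩbd.subset_ball 0
    refine (Metric.isBounded_ball (x := (0:ℝ)) (r := R + ‖ι w 0‖)).subset ?_
    intro s hs
    have h1 : ‖ι w s‖ < R := by
      have := hR hs
      simpa [Metric.mem_ball, dist_eq_norm] using this
    have h2 : ι w s - ι w 0 = s • EuclideanSpace.single i (1:ℝ) := by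
      rw [haff w s]; abel
    have h3 : |s| = ‖ι w s - ι w 0‖ := by
      rw [h2, norm_smul, EuclideanSpace.norm_single]
      simp [Real.norm_eq_abs]
    have h4 : ‖ι w s - ι w 0‖ ≤ ‖ι w s‖ + ‖ι w 0‖ := norm_sub_le _ _
    have : |s| < R + ‖ι w 0‖ := by rw [h3]; linarith
    simpa [Metric.mem_ball, Real.dist_eq] using this
  have hslice : ∀ w, ∫ s in U w, D (ι w s) = 0 := by
    intro w
    have hg : ContDiff ℝ (⊤ : ℕ∞) (φ ∘ ι w) := by
      have hfun : ι w = fun s => ι w 0 + s • EuclideanSpace.single i (1:ℝ) := funext (haff w)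
      exact hφ.comp (by rw [hfun]; exact contDiff_const.add (contDiff_id.smul contDiff_const))
    have hgd : ∀ s, HasDerivAt (φ ∘ ι w) (D (ι w s)) s := fun s =>
      (hφ.differentiable (by simp) _).hasFDerivAt.comp_hasDerivAt s (hderivι w s)
    have hg0 : ∀ s ∈ frontier (U w), (φ ∘ ι w) s = 0 := by
      intro s hsf
      exact h0 _ ((hιcont w).frontier_preimage_subset Ω hsf)
    have := integral_deriv_open_bounded (U w) (hUopen w) (hUbd w) (φ ∘ ι w) hg hg0
    have hfun : (fun s => D (ι w s)) = deriv (φ ∘ ι w) := by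
      funext s; exact ((hgd s).deriv).symm
    rw [show (fun s => D (ι w s)) = deriv (φ ∘ ι w) from hfun] at *
    simpa using this
  -- put everything together
  have h1 : ∫ x in Ω, D x = ∫ x, Ω.indicator D x := (integral_indicator hΩmeas).symm
  have h2 : ∫ x, Ω.indicator D x
      = ∫ p : ℝ × (Fin m → ℝ), Ω.indicator D (e.symm p) := by
    rw [← hP.integral_comp e.measurableEmbedding (fun p => Ω.indicator D (e.symm p))]
    simp
  have hint2 : Integrable (fun p : ℝ × (Fin m → ℝ) => Ω.indicator D (e.symm p)) volume := by
    exact ((MeasurePreserving.symm e hP).integrable_comp_emb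
      e.symm.measurableEmbedding).mpr hintD
  have h3 : ∫ p : ℝ × (Fin m → ℝ), Ω.indicator D (e.symm p)
      = ∫ w : Fin m → ℝ, ∫ s : ℝ, Ω.indicator D (e.symm (s, w)) := by
    rw [Measure.volume_eq_prod] at hint2 ⊢
    exact integral_prod_symm _ hint2
  have h4 : ∀ w, ∫ s : ℝ, Ω.indicator D (e.symm (s, w)) = 0 := by
    intro w
    have : (fun s => Ω.indicator D (e.symm (s, w)))
        = fun s => (U w).indicator (fun s' => D (ι w s')) s := by
      funext s
      exact (Set.indicator_comp_right (fun s : ℝ => ι w s) (g := D)).symm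
    rw [this]
    rw [integral_indicator (hUopen w).measurableSet]
    exact hslice w
  rw [h1, h2, h3]
  simp [h4]



lemma hasDerivAt_setIntegral_param {n : ℕ} (Ω : Set (EuclideanSpace ℝ (Fin n))) (hΩm : MeasurableSet Ω)
    (hΩbd : Bornology.IsBounded Ω)
    (F : ℝ → EuclideanSpace ℝ (Fin n) → ℝ) (hF : ContDiff ℝ (⊤ : ℕ∞) (Function.uncurry F)) (t : ℝ) :
    HasDerivAt (fun τ => ∫ x in Ω, F τ x) (∫ x in Ω, deriv (fun s => F s x) t) t := by
  have hFc : Continuous (Function.uncurry F) := hF.continuous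
  set F' : ℝ → EuclideanSpace ℝ (Fin n) → ℝ := fun s x => fderiv ℝ (Function.uncurry F) (s, x) (1, 0) with hF'
  have hasD : ∀ (s : ℝ) (x : EuclideanSpace ℝ (Fin n)), HasDerivAt (fun σ => F σ x) (F' s x) s := by
    intro s x
    have hcurve : HasDerivAt (fun σ : ℝ => (σ, x)) ((1 : ℝ), (0 : EuclideanSpace ℝ (Fin n))) s :=
      (hasDerivAt_id s).prodMk (hasDerivAt_const s x)
    exact (hF.differentiable (by simp) (s, x)).hasFDerivAt.comp_hasDerivAt s hcurve
  have hF'c : Continuous (fun p : ℝ × EuclideanSpace ℝ (Fin n) => F' p.1 p.2) :=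
    (hF.continuous_fderiv (by simp)).clm_apply continuous_const
  have hderiv_eq : ∀ x : EuclideanSpace ℝ (Fin n), deriv (fun s => F s x) t = F' t x :=
    fun x => (hasD t x).deriv
  -- finite measure
  haveI : IsFiniteMeasure (volume.restrict Ω) := by
    constructor
    rw [Measure.restrict_apply_univ]
    exact lt_of_le_of_lt (measure_mono subset_closure) hΩbd.isCompact_closure.measure_lt_top
  -- bound on compact set
  obtain ⟨C, hC⟩ := ((isCompact_Icc (a := t - 1) (b := t + 1)).prod
      hΩbd.isCompact_closure).exists_bound_of_continuousOn hF'c.continuousOn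
  have key := hasDerivAt_integral_of_dominated_loc_of_deriv_le
    (μ := volume.restrict Ω) (F := F) (F' := F') (x₀ := t) (bound := fun _ => C)
    (Metric.ball_mem_nhds t one_pos)
    (Filter.Eventually.of_forall fun τ =>
      (hFc.comp (Continuous.prodMk_right τ)).aestronglyMeasurable)
    (((hFc.comp (Continuous.prodMk_right t)).continuousOn).integrableOn_compact
        hΩbd.isCompact_closure |>.mono_set subset_closure)
    ((hF'c.comp (Continuous.prodMk_right t)).aestronglyMeasurable)
    ?_ (integrable_const C)
    (Filter.Eventually.of_forall fun x σ _ => hasD σ x)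
  · have := key.2
    simpa only [hderiv_eq] using this
  · refine (ae_restrict_iff' hΩm).2 (Filter.Eventually.of_forall fun x hx => ?_)
    intro σ hσ
    have hσ' : σ ∈ Set.Icc (t-1) (t+1) := by
      have := Metric.mem_ball.mp hσ
      rw [Real.dist_eq, abs_lt] at this
      constructor <;> linarith [this.1, this.2]
    exact hC (σ, x) ⟨hσ', subset_closure hx⟩


open scoped RealInnerProductSpace

section aux
variable {X F' : Type*} [NormedAddCommGroup X] [NormedSpace ℝ X]
  [NormedAddCommGroup F'] [NormedSpace ℝ F']

lemma hasDerivAt_uncurry_section (v : ℝ → X → F')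
    (hv : ContDiff ℝ (⊤ : ℕ∞) (Function.uncurry v)) (t : ℝ) (x : X) :
    HasDerivAt (fun s => v s x) (fderiv ℝ (Function.uncurry v) (t, x) (1, 0)) t := by
  have hcurve : HasDerivAt (fun σ : ℝ => (σ, x)) ((1 : ℝ), (0 : X)) t :=
    (hasDerivAt_id t).prodMk (hasDerivAt_const t x)
  exact (hv.differentiable (by simp) (t, x)).hasFDerivAt.comp_hasDerivAt t hcurve

end aux


/-- a priori estimate for a smooth solution of the Cattaneo system
`c u_t + div q = f`, `q + ν q_t + k∇u = 0` on a bounded domain `Ω` with `u = 0` on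
`∂Ω`: with `G(t) = ∫_Ω c u² + ν∫_Ω k⁻¹|q|²` one has `G'(t) ≤ G(t) + ∫_Ω c⁻¹f²` and
`G(t) ≤ eᵗG(0) + ∫₀ᵗ e^{t−θ}∫_Ω c⁻¹f(·,θ)²`. -/
theorem stmt2 {n : ℕ} (Ω : Set (EuclideanSpace ℝ (Fin n)))
    (hΩopen : IsOpen Ω) (hΩbd : Bornology.IsBounded Ω)
    (T ν c₀ k₀ : ℝ) (hT : 0 < T) (hν : 0 < ν) (hc₀ : 0 < c₀) (hk₀ : 0 < k₀)
    (c k : EuclideanSpace ℝ (Fin n) → ℝ)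
    (hc : ∀ x, c₀ ≤ c x) (hk : ∀ x, k₀ ≤ k x)
    (hcsmooth : ContDiff ℝ (⊤ : ℕ∞) c) (hksmooth : ContDiff ℝ (⊤ : ℕ∞) k)
    (u f : ℝ → EuclideanSpace ℝ (Fin n) → ℝ)
    (q : ℝ → EuclideanSpace ℝ (Fin n) → EuclideanSpace ℝ (Fin n))
    (husmooth : ContDiff ℝ (⊤ : ℕ∞) (Function.uncurry u))
    (hfsmooth : ContDiff ℝ (⊤ : ℕ∞) (Function.uncurry f))
    (hqsmooth : ContDiff ℝ (⊤ : ℕ∞) (Function.uncurry q))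
    (hbc : ∀ t ∈ Set.Icc (0:ℝ) T, ∀ x ∈ frontier Ω, u t x = 0)
    (hbalance : ∀ t ∈ Set.Icc (0:ℝ) T, ∀ x ∈ Ω,
      c x * deriv (fun s => u s x) t
        + ∑ i : Fin n, (fderiv ℝ (q t) x (EuclideanSpace.single i 1)) i
      = f t x)
    (hflux : ∀ t ∈ Set.Icc (0:ℝ) T, ∀ x ∈ Ω,
      q t x + ν • deriv (fun s => q s x) t + k x • gradient (u t) x = 0)
    (G : ℝ → ℝ)
    (hG : ∀ t, G t = (∫ x in Ω, c x * (u t x)^2)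
                   + ν * ∫ x in Ω, (k x)⁻¹ * ‖q t x‖^2) :
    ∀ t ∈ Set.Icc (0:ℝ) T,
      deriv G t ≤ G t + ∫ x in Ω, (c x)⁻¹ * (f t x)^2 ∧
      G t ≤ Real.exp t * G 0
        + ∫ θ in (0:ℝ)..t, Real.exp (t - θ) * ∫ x in Ω, (c x)⁻¹ * (f θ x)^2 := by
  have hΩmeas := hΩopen.measurableSet
  have hGfun : G = fun τ => (∫ x in Ω, c x * (u τ x)^2)
      + ν * ∫ x in Ω, (k x)⁻¹ * ‖q τ x‖^2 := funext hG
  have hcpos : ∀ x, 0 < c x := fun x => lt_of_lt_of_le hc₀ (hc x)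
  have hkpos : ∀ x, 0 < k x := fun x => lt_of_lt_of_le hk₀ (hk x)
  have integ : ∀ (g : EuclideanSpace ℝ (Fin n) → ℝ), Continuous g → IntegrableOn g Ω :=
    fun g hg => (hg.continuousOn.integrableOn_compact hΩbd.isCompact_closure).mono_set
      subset_closure
  have hut : ∀ τ, ContDiff ℝ (⊤ : ℕ∞) (u τ) := fun τ =>
    husmooth.comp ((contDiff_const (c := τ)).prodMk contDiff_id)
  have hqt : ∀ τ, ContDiff ℝ (⊤ : ℕ∞) (q τ) := fun τ =>
    hqsmooth.comp ((contDiff_const (c := τ)).prodMk contDiff_id)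
  have hft : ∀ τ, ContDiff ℝ (⊤ : ℕ∞) (f τ) := fun τ =>
    hfsmooth.comp ((contDiff_const (c := τ)).prodMk contDiff_id)
  set U' : ℝ → EuclideanSpace ℝ (Fin n) → ℝ :=
    fun τ x => fderiv ℝ (Function.uncurry u) (τ, x) (1, 0) with hU'def
  set Q' : ℝ → EuclideanSpace ℝ (Fin n) → EuclideanSpace ℝ (Fin n) :=
    fun τ x => fderiv ℝ (Function.uncurry q) (τ, x) (1, 0) with hQ'def
  have hUd : ∀ τ x, HasDerivAt (fun s => u s x) (U' τ x) τ :=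
    fun τ x => hasDerivAt_uncurry_section u husmooth τ x
  have hQd : ∀ τ x, HasDerivAt (fun s => q s x) (Q' τ x) τ :=
    fun τ x => hasDerivAt_uncurry_section q hqsmooth τ x
  have hU'c : ∀ τ, Continuous (U' τ) := fun τ =>
    ((husmooth.continuous_fderiv (by simp)).comp (Continuous.prodMk_right τ)).clm_apply continuous_const
  have hQ'c : ∀ τ, Continuous (Q' τ) := fun τ =>
    ((hqsmooth.continuous_fderiv (by simp)).comp (Continuous.prodMk_right τ)).clm_apply continuous_const
  have hsm1 : ContDiff ℝ (⊤ : ℕ∞) (Function.uncurry (fun s x => c x * (u s x)^2)) :=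
    (hcsmooth.comp contDiff_snd).mul (husmooth.pow 2)
  have hsm2 : ContDiff ℝ (⊤ : ℕ∞) (Function.uncurry (fun s x => (k x)⁻¹ * ‖q s x‖^2)) :=
    ((hksmooth.comp contDiff_snd).inv (fun p => (hkpos p.2).ne')).mul (hqsmooth.norm_sq ℝ)
  have hsm3 : ContDiff ℝ (⊤ : ℕ∞) (Function.uncurry (fun s x => (c x)⁻¹ * (f s x)^2)) :=
    ((hcsmooth.comp contDiff_snd).inv (fun p => (hcpos p.2).ne')).mul (hfsmooth.pow 2)
  -- derivative of G
  have hGd : ∀ τ, HasDerivAt G ((∫ x in Ω, c x * (2 * u τ x * U' τ x))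
      + ν * ∫ x in Ω, (k x)⁻¹ * (2 * ⟪Q' τ x, q τ x⟫)) τ := by
    intro τ
    have h1 := hasDerivAt_setIntegral_param Ω hΩmeas hΩbd (fun s x => c x * (u s x)^2) hsm1 τ
    have h2 := hasDerivAt_setIntegral_param Ω hΩmeas hΩbd
      (fun s x => (k x)⁻¹ * ‖q s x‖^2) hsm2 τ
    have e1 : ∀ x : EuclideanSpace ℝ (Fin n),
        deriv (fun s => c x * (u s x)^2) τ = c x * (2 * u τ x * U' τ x) := by
      intro x
      have hd := (((hUd τ x).pow 2).const_mul (c x)).deriv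
      simp only [Pi.pow_apply] at hd
      rw [hd]
      push_cast
      ring
    have e2 : ∀ x : EuclideanSpace ℝ (Fin n),
        deriv (fun s => (k x)⁻¹ * ‖q s x‖^2) τ = (k x)⁻¹ * (2 * ⟪Q' τ x, q τ x⟫) := by
      intro x
      have hfun : (fun s => (k x)⁻¹ * ‖q s x‖^2)
          = fun s => (k x)⁻¹ * ⟪q s x, q s x⟫ := by
        funext s; rw [real_inner_self_eq_norm_sq]
      rw [hfun]
      have hd := (((hQd τ x).inner ℝ (hQd τ x)).const_mul ((k x)⁻¹)).deriv
      rw [hd, real_inner_comm (q τ x) (Q' τ x)]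
      ring
    simp only [e1] at h1
    simp only [e2] at h2
    rw [hGfun]
    exact h1.add (h2.const_mul ν)
  -- master estimate
  have master : ∀ t ∈ Set.Icc (0:ℝ) T,
      ((∫ x in Ω, c x * (2 * u t x * U' t x))
        + ν * ∫ x in Ω, (k x)⁻¹ * (2 * ⟪Q' t x, q t x⟫))
      ≤ G t + ∫ x in Ω, (c x)⁻¹ * (f t x)^2 := by
    intro t ht
    have hgrad : ∀ (gg : EuclideanSpace ℝ (Fin n) → ℝ) (y v : EuclideanSpace ℝ (Fin n)),
        ⟪gradient gg y, v⟫ = fderiv ℝ gg y v := by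
      intro gg y v; rw [gradient]; exact InnerProductSpace.toDual_symm_apply
    have hcoordfd : ∀ (i : Fin n) (x v : EuclideanSpace ℝ (Fin n)),
        fderiv ℝ (fun y => q t y i) x v = (fderiv ℝ (q t) x v) i := by
      intro i x v
      have hrw : (fun y => q t y i) = (EuclideanSpace.proj (𝕜 := ℝ) i) ∘ (q t) := rfl
      rw [hrw, fderiv_comp _ (ContinuousLinearMap.differentiableAt _)
        (((hqt t).differentiable (by simp)) x), ContinuousLinearMap.fderiv]
      rfl
    have hrep : ∀ (y : EuclideanSpace ℝ (Fin n)),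
        y = ∑ i, y i • EuclideanSpace.single i (1:ℝ) := by
      intro y; ext j
      rw [show (∑ i, y i • EuclideanSpace.single i (1:ℝ)) j
          = ∑ i, (y i • EuclideanSpace.single i (1:ℝ)) j from by rw [WithLp.ofLp_sum]; exact Finset.sum_apply j _ _]
      simp [EuclideanSpace.single_apply]
    have hfd_expand : ∀ x : EuclideanSpace ℝ (Fin n),
        fderiv ℝ (u t) x (q t x)
          = ∑ i, q t x i * fderiv ℝ (u t) x (EuclideanSpace.single i 1) := by
      intro x
      conv_lhs => rw [hrep (q t x)]
      rw [map_sum]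
      exact Finset.sum_congr rfl fun i _ => by rw [ContinuousLinearMap.map_smul]; rfl
    -- divergence theorem
    have hdiv : ∫ x in Ω,
        (u t x * (∑ i, (fderiv ℝ (q t) x (EuclideanSpace.single i 1)) i)
          + fderiv ℝ (u t) x (q t x)) = 0 := by
      have hterm : ∀ (i : Fin n) (x : EuclideanSpace ℝ (Fin n)),
          fderiv ℝ (fun y => u t y * q t y i) x (EuclideanSpace.single i 1)
          = u t x * (fderiv ℝ (q t) x (EuclideanSpace.single i 1)) i
            + q t x i * fderiv ℝ (u t) x (EuclideanSpace.single i 1) := by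
        intro i x
        have hdiffd : DifferentiableAt ℝ (fun y => q t y i) x :=
          (ContinuousLinearMap.differentiableAt (EuclideanSpace.proj (𝕜 := ℝ) i)).comp x
            (((hqt t).differentiable (by simp)) x)
        rw [fderiv_fun_mul (((hut t).differentiable (by simp)) x) hdiffd]
        simp only [ContinuousLinearMap.add_apply, ContinuousLinearMap.coe_smul',
          Pi.smul_apply, smul_eq_mul]
        rw [hcoordfd i x]
      have hptw : ∀ x : EuclideanSpace ℝ (Fin n),
          u t x * (∑ i, (fderiv ℝ (q t) x (EuclideanSpace.single i 1)) i)
            + fderiv ℝ (u t) x (q t x)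
          = ∑ i, fderiv ℝ (fun y => u t y * q t y i) x (EuclideanSpace.single i 1) := by
        intro x
        rw [hfd_expand x, Finset.mul_sum, ← Finset.sum_add_distrib]
        exact Finset.sum_congr rfl fun i _ => (hterm i x).symm
      rw [setIntegral_congr_fun hΩmeas (fun x _ => hptw x)]
      have hφ : ∀ i : Fin n, ContDiff ℝ (⊤ : ℕ∞) (fun y => u t y * q t y i) := fun i =>
        (hut t).mul ((EuclideanSpace.proj (𝕜 := ℝ) i).contDiff.comp (hqt t))
      have hintφ : ∀ i : Fin n, IntegrableOn
          (fun x => fderiv ℝ (fun y => u t y * q t y i) x (EuclideanSpace.single i 1)) Ω :=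
        fun i => integ _ ((((hφ i).continuous_fderiv (by simp))).clm_apply continuous_const)
      rw [integral_finset_sum _ (fun i _ => hintφ i)]
      refine Finset.sum_eq_zero fun i _ => ?_
      refine integral_fderiv_single_zero Ω hΩopen hΩbd _ (hφ i) (fun x hx => ?_) i
      rw [hbc t ht x hx, zero_mul]
    -- pointwise identity on Ω
    have hEq : ∀ x ∈ Ω,
        c x * (2 * u t x * U' t x) + ν * ((k x)⁻¹ * (2 * ⟪Q' t x, q t x⟫))
        = 2 * u t x * f t x - 2 * ((k x)⁻¹ * ‖q t x‖^2)
          - 2 * (u t x * (∑ i, (fderiv ℝ (q t) x (EuclideanSpace.single i 1)) i)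
                 + fderiv ℝ (u t) x (q t x)) := by
      intro x hx
      have hbx := hbalance t ht x hx
      rw [(hUd t x).deriv] at hbx
      have hfx := hflux t ht x hx
      have hinner : ⟪q t x, q t x⟫ + ν * ⟪Q' t x, q t x⟫
          + k x * fderiv ℝ (u t) x (q t x) = 0 := by
        have h0' : ⟪q t x + ν • deriv (fun s => q s x) t + k x • gradient (u t) x, q t x⟫
            = 0 := by rw [hfx]; exact inner_zero_left _
        rw [(hQd t x).deriv] at h0'
        rw [inner_add_left, inner_add_left, real_inner_smul_left, real_inner_smul_left,
          hgrad] at h0'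
        linarith [h0']
      have hnorm : ⟪q t x, q t x⟫ = ‖q t x‖^2 := real_inner_self_eq_norm_sq _
      have hne : (k x) ≠ 0 := (hkpos x).ne'
      have hcU : c x * U' t x
          = f t x - (∑ i, (fderiv ℝ (q t) x (EuclideanSpace.single i 1)) i) := by
        linarith [hbx]
      have hQin : ν * ⟪Q' t x, q t x⟫
          = -‖q t x‖^2 - k x * fderiv ℝ (u t) x (q t x) := by
        rw [← hnorm]; linarith [hinner]
      linear_combination (2 * u t x) * hcU + (2 * (k x)⁻¹) * hQin
        + (-2 * fderiv ℝ (u t) x (q t x)) * (inv_mul_cancel₀ hne)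
    -- integrability
    have hc1 : IntegrableOn (fun x => c x * (2 * u t x * U' t x)) Ω :=
      integ _ (hcsmooth.continuous.mul
        ((continuous_const.mul (hut t).continuous).mul (hU'c t)))
    have hc2 : IntegrableOn (fun x => (k x)⁻¹ * (2 * ⟪Q' t x, q t x⟫)) Ω :=
      integ _ ((hksmooth.continuous.inv₀ (fun x => (hkpos x).ne')).mul
        (continuous_const.mul ((hQ'c t).inner (hqt t).continuous)))
    have hc3 : IntegrableOn (fun x => 2 * u t x * f t x) Ω :=
      integ _ ((continuous_const.mul (hut t).continuous).mul (hft t).continuous)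
    have hc4 : IntegrableOn (fun x => (k x)⁻¹ * ‖q t x‖^2) Ω :=
      integ _ ((hksmooth.continuous.inv₀ (fun x => (hkpos x).ne')).mul
        ((hqt t).continuous.norm.pow 2))
    have hc5 : IntegrableOn (fun x =>
        u t x * (∑ i, (fderiv ℝ (q t) x (EuclideanSpace.single i 1)) i)
        + fderiv ℝ (u t) x (q t x)) Ω := by
      refine integ _ (Continuous.add (Continuous.mul (hut t).continuous ?_) ?_)
      · exact continuous_finset_sum _ fun i _ => (EuclideanSpace.proj (𝕜 := ℝ) i).continuous.comp
          ((((hqt t).continuous_fderiv (by simp))).clm_apply continuous_const)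
      · exact (((hut t).continuous_fderiv (by simp))).clm_apply (hqt t).continuous
    have hc6 : IntegrableOn (fun x => c x * (u t x)^2) Ω :=
      integ _ (hcsmooth.continuous.mul ((hut t).continuous.pow 2))
    have hc8 : IntegrableOn (fun x => (c x)⁻¹ * (f t x)^2) Ω :=
      integ _ ((hcsmooth.continuous.inv₀ (fun x => (hcpos x).ne')).mul
        ((hft t).continuous.pow 2))
    -- assemble the derivative value
    have hDt_eq : (∫ x in Ω, c x * (2 * u t x * U' t x))
        + ν * ∫ x in Ω, (k x)⁻¹ * (2 * ⟪Q' t x, q t x⟫)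
        = (∫ x in Ω, 2 * u t x * f t x) - 2 * ∫ x in Ω, (k x)⁻¹ * ‖q t x‖^2 := by
      rw [← integral_const_mul ν, ← integral_add hc1 (hc2.const_mul ν)]
      rw [setIntegral_congr_fun hΩmeas (fun x hx => hEq x hx)]
      have hsub1 : IntegrableOn (fun x => 2 * u t x * f t x
          - 2 * ((k x)⁻¹ * ‖q t x‖^2)) Ω := hc3.sub (hc4.const_mul 2)
      rw [integral_sub hsub1 (hc5.const_mul 2),
        integral_sub hc3 (hc4.const_mul 2), integral_const_mul, integral_const_mul, hdiv]
      ring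
    rw [hDt_eq]
    -- the energy inequality
    have hmono : (∫ x in Ω, 2 * u t x * f t x)
        ≤ ∫ x in Ω, (c x * (u t x)^2 + (c x)⁻¹ * (f t x)^2) := by
      refine setIntegral_mono_on hc3 (hc6.add hc8) hΩmeas fun x _ => ?_
      have hcx := hcpos x
      have h2 : 0 ≤ (c x)⁻¹ * (c x * u t x - f t x)^2 := by positivity
      have hexp : (c x)⁻¹ * (c x * u t x - f t x)^2
          = c x * (u t x)^2 - 2 * u t x * f t x + (c x)⁻¹ * (f t x)^2 := by
        field_simp
        ring
      linarith [hexp ▸ h2]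
    have hI2 : 0 ≤ ∫ x in Ω, (k x)⁻¹ * ‖q t x‖^2 :=
      setIntegral_nonneg hΩmeas fun x _ =>
        mul_nonneg (inv_nonneg.mpr (hkpos x).le) (by positivity)
    rw [integral_add hc6 hc8] at hmono
    rw [hG t]
    have hν2 : -2 * (∫ x in Ω, (k x)⁻¹ * ‖q t x‖^2)
        ≤ ν * ∫ x in Ω, (k x)⁻¹ * ‖q t x‖^2 := by nlinarith [hI2, hν]
    linarith
  -- part 2 preparation: Gronwall
  have hGc : Continuous G :=
    continuous_iff_continuousAt.mpr fun τ => (hGd τ).differentiableAt.continuousAt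
  have hhc : Continuous (fun θ => ∫ x in Ω, (c x)⁻¹ * (f θ x)^2) :=
    continuous_iff_continuousAt.mpr fun θ =>
      (hasDerivAt_setIntegral_param Ω hΩmeas hΩbd (fun s x => (c x)⁻¹ * (f s x)^2)
        hsm3 θ).differentiableAt.continuousAt
  set H : ℝ → ℝ := fun θ => ∫ x in Ω, (c x)⁻¹ * (f θ x)^2 with hHdef
  have hcontInt : Continuous (fun θ => Real.exp (-θ) * H θ) :=
    (Real.continuous_exp.comp continuous_neg).mul hhc
  have hFTC : ∀ τ : ℝ, HasDerivAt (fun σ => ∫ θ in (0:ℝ)..σ, Real.exp (-θ) * H θ)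
      (Real.exp (-τ) * H τ) τ := fun τ =>
    intervalIntegral.integral_hasDerivAt_right (hcontInt.intervalIntegrable _ _)
      (hcontInt.stronglyMeasurableAtFilter _ _) hcontInt.continuousAt
  set W : ℝ → ℝ := fun σ => Real.exp (-σ) * G σ - ∫ θ in (0:ℝ)..σ, Real.exp (-θ) * H θ
    with hWdef
  have hexpd : ∀ τ : ℝ, HasDerivAt (fun σ => Real.exp (-σ)) (-Real.exp (-τ)) τ := by
    intro τ
    have := (Real.hasDerivAt_exp (-τ)).comp τ ((hasDerivAt_id τ).neg)
    simpa [Function.comp_def] using this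
  have hWd : ∀ τ : ℝ, HasDerivAt W
      (-Real.exp (-τ) * G τ + Real.exp (-τ) * ((∫ x in Ω, c x * (2 * u τ x * U' τ x))
        + ν * ∫ x in Ω, (k x)⁻¹ * (2 * ⟪Q' τ x, q τ x⟫)) - Real.exp (-τ) * H τ) τ := by
    intro τ
    exact ((hexpd τ).mul (hGd τ)).sub (hFTC τ)
  have hWanti : AntitoneOn W (Set.Icc 0 T) := by
    refine antitoneOn_of_deriv_nonpos (convex_Icc 0 T) ?_ ?_ ?_
    · exact (Continuous.sub ((Real.continuous_exp.comp continuous_neg).mul hGc)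
        (continuous_iff_continuousAt.mpr fun τ => (hFTC τ).differentiableAt.continuousAt)
        ).continuousOn
    · intro τ _
      exact (hWd τ).differentiableAt.differentiableWithinAt
    · intro τ hτ
      rw [interior_Icc] at hτ
      rw [(hWd τ).deriv]
      have hm := master τ (Set.Ioo_subset_Icc_self hτ)
      have hel : (0:ℝ) ≤ Real.exp (-τ) := (Real.exp_pos _).le
      nlinarith [mul_le_mul_of_nonneg_left hm hel]
  intro t ht
  refine ⟨?_, ?_⟩
  · rw [(hGd t).deriv]
    exact master t ht
  · have hW0 : W 0 = G 0 := by
      simp [hWdef]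
    have hWt : W t ≤ W 0 := hWanti (Set.left_mem_Icc.mpr hT.le) ht ht.1
    rw [hW0] at hWt
    have hWt' : Real.exp (-t) * G t ≤ G 0 + ∫ θ in (0:ℝ)..t, Real.exp (-θ) * H θ := by
      have : Real.exp (-t) * G t - ∫ θ in (0:ℝ)..t, Real.exp (-θ) * H θ ≤ G 0 := hWt
      linarith
    have hmul := mul_le_mul_of_nonneg_left hWt' (Real.exp_pos t).le
    have hLHS : Real.exp t * (Real.exp (-t) * G t) = G t := by
      rw [← mul_assoc, ← Real.exp_add]
      simp
    rw [hLHS, mul_add] at hmul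
    have hRHS : Real.exp t * ∫ θ in (0:ℝ)..t, Real.exp (-θ) * H θ
        = ∫ θ in (0:ℝ)..t, Real.exp (t - θ) * H θ := by
      rw [← intervalIntegral.integral_const_mul]
      refine intervalIntegral.integral_congr fun θ _ => ?_
      rw [← mul_assoc, ← Real.exp_add, sub_eq_add_neg]
    rw [hRHS] at hmul
    exact hmul
end

section
/- Under the hypotheses of the weighted scheme for the hyperbolic system with σ ≥ 1/2, the following discrete energy identity holds: (cuⁿ⁺¹,uⁿ⁺¹) − (cuⁿ,uⁿ) + νΣα[(k⁻¹qαⁿ⁺¹,qαⁿ⁺¹) − (k⁻¹qαⁿ,qαⁿ)] + (2σ−1)τ²(c(uⁿ⁺¹−uⁿ)/τ,(uⁿ⁺¹−uⁿ)/τ) + (2σ−1)τ²νΣα(k⁻¹(qαⁿ⁺¹−qαⁿ)/τ,(qαⁿ⁺¹−qαⁿ)/τ) + 2τΣα(k⁻¹qα^{σ(n)},qα^{σ(n)}) = 2τ(fⁿ⁺¹ᐟ², u^{σ(n)}). -/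
/-!
Test the flux equations with `2τ k⁻¹ q^σ` and the balance equation with `2τ u^σ`.
Since the balance equation involves the adjoints of the `Aα`, the coupling terms
`⟪qα^σ, Aα u^σ⟫` cancel in the sum. For a symmetric `B` (here `c` and `k⁻¹`, the latter
symmetric because `k` is), the discrete product rule
`2 ⟪B (x - y), σ x + (1 - σ) y⟫ = ⟪B x, x⟫ - ⟪B y, y⟫ + (2σ - 1) ⟪B (x - y), x - y⟫`
turns each remaining time difference into a jump of energy plus the `(2σ - 1)` term.
-/

open scoped RealInnerProductSpace

namespace LinearMap

variable {E F : Type*} [NormedAddCommGroup E] [InnerProductSpace ℝ E]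
  [NormedAddCommGroup F] [InnerProductSpace ℝ F]

theorem IsSymmetric.of_rightInverse {K L : E →ₗ[ℝ] E} (hK : K.IsSymmetric)
    (hKL : ∀ x, K (L x) = x) : L.IsSymmetric := fun x y =>
  calc ⟪L x, y⟫ = ⟪L x, K (L y)⟫ := by rw [hKL]
    _ = ⟪K (L x), L y⟫ := (hK _ _).symm
    _ = ⟪x, L y⟫ := by rw [hKL]

theorem IsSymmetric.two_mul_inner_sub_weighted {B : E →ₗ[ℝ] E} (hB : B.IsSymmetric)
    (σ : ℝ) (x y : E) :
    2 * ⟪B (x - y), σ • x + (1 - σ) • y⟫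
      = ⟪B x, x⟫ - ⟪B y, y⟫ + (2 * σ - 1) * ⟪B (x - y), x - y⟫ := by
  have hxy : ⟪B x, y⟫ = ⟪B y, x⟫ := by rw [hB, real_inner_comm]
  simp only [map_sub, inner_sub_left, inner_sub_right, inner_add_right,
    real_inner_smul_right]
  rw [hxy]
  ring

theorem inner_map_smul_smul (B : E →ₗ[ℝ] E) (a : ℝ) (x : E) :
    ⟪B (a • x), a • x⟫ = a ^ 2 * ⟪B x, x⟫ := by
  rw [map_smul, real_inner_smul_left, real_inner_smul_right]
  ring

theorem inner_of_flux_eq_zero {A : E →ₗ[ℝ] F} {K L : F →ₗ[ℝ] F} (hK : K.IsSymmetric)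
    (hKL : ∀ x, K (L x) = x) {p d : F} {w : E} {a : ℝ} (h : p + a • d + K (A w) = 0) :
    ⟪L p, p⟫ + a * ⟪L d, p⟫ + ⟪p, A w⟫ = 0 := by
  have htest := congrArg (⟪L p, ·⟫) h
  simp only [inner_add_right, real_inner_smul_right, inner_zero_right] at htest
  rwa [← hK, hKL, (hK.of_rightInverse hKL) p d, real_inner_comm (L d)] at htest

end LinearMap

open LinearMap

theorem stmt8_general {H H₁ H₂ : Type*}
    [NormedAddCommGroup H] [InnerProductSpace ℝ H] [FiniteDimensional ℝ H]
    [NormedAddCommGroup H₁] [InnerProductSpace ℝ H₁] [FiniteDimensional ℝ H₁]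
    [NormedAddCommGroup H₂] [InnerProductSpace ℝ H₂] [FiniteDimensional ℝ H₂]
    (A₁ : H →ₗ[ℝ] H₁) (A₂ : H →ₗ[ℝ] H₂)
    (c : H →ₗ[ℝ] H) (k₁op kinv₁ : H₁ →ₗ[ℝ] H₁) (k₂op kinv₂ : H₂ →ₗ[ℝ] H₂)
    (hcsym : ∀ x y : H, ⟪c x, y⟫ = ⟪x, c y⟫)
    (hk₁sym : ∀ x y : H₁, ⟪k₁op x, y⟫ = ⟪x, k₁op y⟫)
    (hk₂sym : ∀ x y : H₂, ⟪k₂op x, y⟫ = ⟪x, k₂op y⟫)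
    (hkinv₁ : ∀ x : H₁, k₁op (kinv₁ x) = x)
    (hkinv₂ : ∀ x : H₂, k₂op (kinv₂ x) = x)
    (ν τ σ : ℝ) (hτ : 0 < τ)
    (u : ℕ → H) (q₁ : ℕ → H₁) (q₂ : ℕ → H₂) (f : ℕ → H)
    (hflux₁ : ∀ n : ℕ,
      (σ • q₁ (n+1) + (1-σ) • q₁ n) + (ν/τ) • (q₁ (n+1) - q₁ n)
        + k₁op (A₁ (σ • u (n+1) + (1-σ) • u n)) = 0)
    (hflux₂ : ∀ n : ℕ,
      (σ • q₂ (n+1) + (1-σ) • q₂ n) + (ν/τ) • (q₂ (n+1) - q₂ n)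
        + k₂op (A₂ (σ • u (n+1) + (1-σ) • u n)) = 0)
    (hbalance : ∀ n : ℕ,
      (1/τ) • c (u (n+1) - u n)
        - (LinearMap.adjoint A₁ (σ • q₁ (n+1) + (1-σ) • q₁ n)
           + LinearMap.adjoint A₂ (σ • q₂ (n+1) + (1-σ) • q₂ n)) = f n) :
    ∀ n : ℕ,
      ⟪c (u (n+1)), u (n+1)⟫ - ⟪c (u n), u n⟫
      + ν * ((⟪kinv₁ (q₁ (n+1)), q₁ (n+1)⟫ - ⟪kinv₁ (q₁ n), q₁ n⟫)
           + (⟪kinv₂ (q₂ (n+1)), q₂ (n+1)⟫ - ⟪kinv₂ (q₂ n), q₂ n⟫))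
      + (2*σ-1) * τ^2 * ⟪c ((1/τ) • (u (n+1) - u n)), (1/τ) • (u (n+1) - u n)⟫
      + (2*σ-1) * τ^2 * ν *
          (⟪kinv₁ ((1/τ) • (q₁ (n+1) - q₁ n)), (1/τ) • (q₁ (n+1) - q₁ n)⟫
           + ⟪kinv₂ ((1/τ) • (q₂ (n+1) - q₂ n)), (1/τ) • (q₂ (n+1) - q₂ n)⟫)
      + 2 * τ * (⟪kinv₁ (σ • q₁ (n+1) + (1-σ) • q₁ n), σ • q₁ (n+1) + (1-σ) • q₁ n⟫
           + ⟪kinv₂ (σ • q₂ (n+1) + (1-σ) • q₂ n), σ • q₂ (n+1) + (1-σ) • q₂ n⟫)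
      = 2 * τ * ⟪f n, σ • u (n+1) + (1-σ) • u n⟫ := by
  intro n
  have hτ₀ : τ ≠ 0 := hτ.ne'
  have flux₁ := inner_of_flux_eq_zero hk₁sym hkinv₁ (hflux₁ n)
  have flux₂ := inner_of_flux_eq_zero hk₂sym hkinv₂ (hflux₂ n)
  have balance := congrArg (⟪·, σ • u (n+1) + (1-σ) • u n⟫) (hbalance n)
  rw [inner_sub_left, inner_add_left, real_inner_smul_left, adjoint_inner_left,
    adjoint_inner_left] at balance
  have energy := IsSymmetric.two_mul_inner_sub_weighted hcsym σ (u (n+1)) (u n)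
  have energy₁ := (IsSymmetric.of_rightInverse hk₁sym hkinv₁).two_mul_inner_sub_weighted σ
    (q₁ (n+1)) (q₁ n)
  have energy₂ := (IsSymmetric.of_rightInverse hk₂sym hkinv₂).two_mul_inner_sub_weighted σ
    (q₂ (n+1)) (q₂ n)
  simp only [inner_map_smul_smul]
  linear_combination (norm := (field_simp; ring))
    -energy - ν * energy₁ - ν * energy₂ + 2 * τ * flux₁ + 2 * τ * flux₂ + 2 * τ * balance

/-- discrete energy identity for the weighted scheme for the hyperbolic
system (obtained by testing the flux equations with `2τk⁻¹qα^{σ(n)}` and the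
temperature equation with `2τu^{σ(n)}`). -/
theorem stmt8 {H H₁ H₂ : Type*}
    [NormedAddCommGroup H] [InnerProductSpace ℝ H] [FiniteDimensional ℝ H]
    [NormedAddCommGroup H₁] [InnerProductSpace ℝ H₁] [FiniteDimensional ℝ H₁]
    [NormedAddCommGroup H₂] [InnerProductSpace ℝ H₂] [FiniteDimensional ℝ H₂]
    (A₁ : H →ₗ[ℝ] H₁) (A₂ : H →ₗ[ℝ] H₂)
    (c : H →ₗ[ℝ] H) (k₁op kinv₁ : H₁ →ₗ[ℝ] H₁) (k₂op kinv₂ : H₂ →ₗ[ℝ] H₂)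
    (hcsym : ∀ x y : H, ⟪c x, y⟫ = ⟪x, c y⟫)
    (hk₁sym : ∀ x y : H₁, ⟪k₁op x, y⟫ = ⟪x, k₁op y⟫)
    (hk₂sym : ∀ x y : H₂, ⟪k₂op x, y⟫ = ⟪x, k₂op y⟫)
    (c₀ : ℝ) (hc₀ : 0 < c₀)
    (hc : ∀ x : H, c₀ * ‖x‖^2 ≤ ⟪c x, x⟫)
    (hk₁pos : ∀ x : H₁, x ≠ 0 → 0 < ⟪k₁op x, x⟫)
    (hk₂pos : ∀ x : H₂, x ≠ 0 → 0 < ⟪k₂op x, x⟫)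
    (hkinv₁ : ∀ x : H₁, k₁op (kinv₁ x) = x) (hkinv₁' : ∀ x : H₁, kinv₁ (k₁op x) = x)
    (hkinv₂ : ∀ x : H₂, k₂op (kinv₂ x) = x) (hkinv₂' : ∀ x : H₂, kinv₂ (k₂op x) = x)
    (ν τ σ : ℝ) (hν : 0 < ν) (hτ : 0 < τ) (hσ : 1/2 ≤ σ)
    (u : ℕ → H) (q₁ : ℕ → H₁) (q₂ : ℕ → H₂) (f : ℕ → H)
    (hflux₁ : ∀ n : ℕ,
      (σ • q₁ (n+1) + (1-σ) • q₁ n) + (ν/τ) • (q₁ (n+1) - q₁ n)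
        + k₁op (A₁ (σ • u (n+1) + (1-σ) • u n)) = 0)
    (hflux₂ : ∀ n : ℕ,
      (σ • q₂ (n+1) + (1-σ) • q₂ n) + (ν/τ) • (q₂ (n+1) - q₂ n)
        + k₂op (A₂ (σ • u (n+1) + (1-σ) • u n)) = 0)
    (hbalance : ∀ n : ℕ,
      (1/τ) • c (u (n+1) - u n)
        - (LinearMap.adjoint A₁ (σ • q₁ (n+1) + (1-σ) • q₁ n)
           + LinearMap.adjoint A₂ (σ • q₂ (n+1) + (1-σ) • q₂ n)) = f n) :
    ∀ n : ℕ,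
      ⟪c (u (n+1)), u (n+1)⟫ - ⟪c (u n), u n⟫
      + ν * ((⟪kinv₁ (q₁ (n+1)), q₁ (n+1)⟫ - ⟪kinv₁ (q₁ n), q₁ n⟫)
           + (⟪kinv₂ (q₂ (n+1)), q₂ (n+1)⟫ - ⟪kinv₂ (q₂ n), q₂ n⟫))
      + (2*σ-1) * τ^2 * ⟪c ((1/τ) • (u (n+1) - u n)), (1/τ) • (u (n+1) - u n)⟫
      + (2*σ-1) * τ^2 * ν *
          (⟪kinv₁ ((1/τ) • (q₁ (n+1) - q₁ n)), (1/τ) • (q₁ (n+1) - q₁ n)⟫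
           + ⟪kinv₂ ((1/τ) • (q₂ (n+1) - q₂ n)), (1/τ) • (q₂ (n+1) - q₂ n)⟫)
      + 2 * τ * (⟪kinv₁ (σ • q₁ (n+1) + (1-σ) • q₁ n), σ • q₁ (n+1) + (1-σ) • q₁ n⟫
           + ⟪kinv₂ (σ • q₂ (n+1) + (1-σ) • q₂ n), σ • q₂ (n+1) + (1-σ) • q₂ n⟫)
      = 2 * τ * ⟪f n, σ • u (n+1) + (1-σ) • u n⟫ :=
  stmt8_general A₁ A₂ c k₁op kinv₁ k₂op kinv₂ hcsym hk₁sym hk₂sym hkinv₁ hkinv₂ ν τ σ hτ u q₁ q₂ f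
    hflux₁ hflux₂ hbalance
end
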